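/- Let P be a non-empty closed convex set of BCEs. Then there exists a P-minimally mixed BCE: an element p ∈ P which has P-maximal support (supp(q) ⊆ supp(p) for all q ∈ P), and such that for all q ∈ P, i ∈ I, and a_i, b_i ∈ supp_i(q), q_{a_i} ≠ q_{b_i} implies p_{a_i} ≠ p_{b_i}. -/
import Mathlib


open Finset

variable {I : Type} [Fintype I] [DecidableEq I]
  {A : I → Type} [∀ i, Fintype (A i)] [∀ i, DecidableEq (A i)]
  {Θ : Type} [Fintype Θ]

/-- The marginal probability that player `i` plays `ai` under outcome `p`. -/
noncomputable def marg (p : ((∀ j, A j) × Θ) → ℝ) (i : I) (ai : A i) : ℝ :=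
  ∑ x : (∀ j, A j) × Θ, if x.1 i = ai then p x else 0

/-- The conditional belief of player `i` given recommendation `ai`, represented
as a function on full profile-state pairs that ignores the `i`-th coordinate
(it is overridden by `ai`).  It is the zero function if `marg p i ai = 0`. -/
noncomputable def condBelief (p : ((∀ j, A j) × Θ) → ℝ) (i : I) (ai : A i) :
    ((∀ j, A j) × Θ) → ℝ :=
  fun x => p (Function.update x.1 i ai, x.2) / marg p i ai

/-- Expected utility for player `i` of playing `ci` against belief `μ`. -/
noncomputable def dev (u : ((∀ j, A j) × Θ) → ℝ) (i : I) (ci : A i)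
    (μ : ((∀ j, A j) × Θ) → ℝ) : ℝ :=
  ∑ x : (∀ j, A j) × Θ, u (Function.update x.1 i ci, x.2) * μ x

/-- Best responses of player `i` (with utility `u`) to belief `μ`. -/
noncomputable def BRset (u : ((∀ j, A j) × Θ) → ℝ) (i : I)
    (μ : ((∀ j, A j) × Θ) → ℝ) : Set (A i) :=
  {ci | ∀ di : A i, dev u i di μ ≤ dev u i ci μ}

/-- The obedience constraint defining a Bayes correlated equilibrium. -/
def Obedient (u : ∀ i : I, ((∀ j, A j) × Θ) → ℝ) (p : ((∀ j, A j) × Θ) → ℝ) : Prop :=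
  ∀ i : I, ∀ ai bi : A i,
    0 ≤ ∑ x : (∀ j, A j) × Θ,
      (if x.1 i = ai then (u i x - u i (Function.update x.1 i bi, x.2)) * p x else 0)

/-- The separation constraint: recommendations inducing distinct beliefs have
disjoint best-response sets. -/
def Separated (u : ∀ i : I, ((∀ j, A j) × Θ) → ℝ) (p : ((∀ j, A j) × Θ) → ℝ) : Prop :=
  ∀ i : I, ∀ ai bi : A i, 0 < marg p i ai → 0 < marg p i bi →
    condBelief p i ai ≠ condBelief p i bi →
    BRset (u i) i (condBelief p i ai) ∩ BRset (u i) i (condBelief p i bi) = ∅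

/-- `p` is an outcome with `Θ`-marginal `π`. -/
def IsOutcome (π : Θ → ℝ) (p : ((∀ j, A j) × Θ) → ℝ) : Prop :=
  (∀ x, 0 ≤ p x) ∧ ∀ θ, (∑ a : ∀ j, A j, p (a, θ)) = π θ

/-- `p` is `P`-minimally mixed: it has `P`-maximal support, and any pair of
recommendations with distinct conditional beliefs under some `q ∈ P` also has
distinct conditional beliefs under `p`. -/
def MinMixed (P : Set (((∀ j, A j) × Θ) → ℝ)) (p : ((∀ j, A j) × Θ) → ℝ) : Prop :=
  (∀ q ∈ P, ∀ i : I, ∀ ai : A i, 0 < marg q i ai → 0 < marg p i ai) ∧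
  (∀ q ∈ P, ∀ i : I, ∀ ai bi : A i, 0 < marg q i ai → 0 < marg q i bi →
    condBelief q i ai ≠ condBelief q i bi → condBelief p i ai ≠ condBelief p i bi)


section Aux

variable {I : Type} [Fintype I] [DecidableEq I]
  {A : I → Type} [∀ i, Fintype (A i)] [∀ i, DecidableEq (A i)]
  {Θ : Type} [Fintype Θ]

lemma marg_nonneg (p : ((∀ j, A j) × Θ) → ℝ) (hp : ∀ x, 0 ≤ p x) (i : I) (ai : A i) :
    0 ≤ marg p i ai := by
  apply Finset.sum_nonneg
  intro x _
  split <;> simp [hp x]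

lemma marg_mix (q p : ((∀ j, A j) × Θ) → ℝ) (t s : ℝ) (i : I) (ai : A i) :
    marg (fun x => t * q x + s * p x) i ai = t * marg q i ai + s * marg p i ai := by
  unfold marg
  rw [Finset.mul_sum, Finset.mul_sum, ← Finset.sum_add_distrib]
  refine Finset.sum_congr rfl fun x _ => ?_
  split <;> ring

/-- Generic bad-set lemma: if `q` has distinct beliefs at `ai, bi`, then for all but
finitely many `t ∈ (0,1]`, the mixture `t q + (1-t) p` has distinct beliefs too. -/
lemma exists_finite_badset (q p : ((∀ j, A j) × Θ) → ℝ) (hp0 : ∀ x, 0 ≤ p x)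
    (i : I) (ai bi : A i) (hmaq : 0 < marg q i ai) (hmbq : 0 < marg q i bi)
    (hne : condBelief q i ai ≠ condBelief q i bi) :
    ∃ B : Set ℝ, B.Finite ∧ ∀ t : ℝ, 0 < t → t ≤ 1 → t ∉ B →
      condBelief (fun x => t * q x + (1 - t) * p x) i ai ≠
      condBelief (fun x => t * q x + (1 - t) * p x) i bi := by
  obtain ⟨x, hx⟩ := Function.ne_iff.mp hne
  set qa := q (Function.update x.1 i ai, x.2) with hqa
  set qb := q (Function.update x.1 i bi, x.2) with hqb
  set pa := p (Function.update x.1 i ai, x.2) with hpa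
  set pb := p (Function.update x.1 i bi, x.2) with hpb
  set Mqa := marg q i ai
  set Mqb := marg q i bi
  set Mpa := marg p i ai
  set Mpb := marg p i bi
  have hcross : qa * Mqb ≠ qb * Mqa := by
    intro h
    exact hx ((div_eq_div_iff hmaq.ne' hmbq.ne').mpr h)
  set Pg : Polynomial ℝ :=
    (Polynomial.C qa * Polynomial.X + Polynomial.C pa * (1 - Polynomial.X)) *
      (Polynomial.C Mqb * Polynomial.X + Polynomial.C Mpb * (1 - Polynomial.X)) -
    (Polynomial.C qb * Polynomial.X + Polynomial.C pb * (1 - Polynomial.X)) *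
      (Polynomial.C Mqa * Polynomial.X + Polynomial.C Mpa * (1 - Polynomial.X)) with hPg
  have heval : ∀ t : ℝ, Pg.eval t =
      (t * qa + (1 - t) * pa) * (t * Mqb + (1 - t) * Mpb) -
      (t * qb + (1 - t) * pb) * (t * Mqa + (1 - t) * Mpa) := by
    intro t; simp [hPg]; ring
  have hPgne : Pg ≠ 0 := by
    intro h
    have := heval 1
    rw [h] at this
    simp at this
    exact hcross (by linarith)
  refine ⟨{t | Pg.IsRoot t}, Polynomial.finite_setOf_isRoot hPgne, ?_⟩
  intro t ht0 ht1 htB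
  have hma : 0 < t * Mqa + (1 - t) * Mpa := by
    have := marg_nonneg p hp0 i ai
    nlinarith
  have hmb : 0 < t * Mqb + (1 - t) * Mpb := by
    have := marg_nonneg p hp0 i bi
    nlinarith
  intro hEq
  apply htB
  have hx2 := congrFun hEq x
  simp only [condBelief, marg_mix] at hx2
  have : (t * qa + (1 - t) * pa) * (t * Mqb + (1 - t) * Mpb) =
      (t * qb + (1 - t) * pb) * (t * Mqa + (1 - t) * Mpa) :=
    (div_eq_div_iff hma.ne' hmb.ne').mp hx2
  show Pg.IsRoot t
  rw [Polynomial.IsRoot, heval t]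
  linarith

open Classical in
/-- The finset recording support pairs and belief-distinct triples of `p`. -/
noncomputable def Tset (p : ((∀ j, A j) × Θ) → ℝ) :
    Finset ((Σ i : I, A i) ⊕ (Σ i : I, A i × A i)) :=
  Finset.univ.filter (Sum.elim
    (fun z => 0 < marg p z.1 z.2)
    (fun z => 0 < marg p z.1 z.2.1 ∧ 0 < marg p z.1 z.2.2 ∧
      condBelief p z.1 z.2.1 ≠ condBelief p z.1 z.2.2))

lemma mem_Tset_inl (p : ((∀ j, A j) × Θ) → ℝ) (z : Σ i : I, A i) :
    Sum.inl z ∈ Tset p ↔ 0 < marg p z.1 z.2 := by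
  simp [Tset]

lemma mem_Tset_inr (p : ((∀ j, A j) × Θ) → ℝ) (z : Σ i : I, A i × A i) :
    Sum.inr z ∈ Tset p ↔ (0 < marg p z.1 z.2.1 ∧ 0 < marg p z.1 z.2.2 ∧
      condBelief p z.1 z.2.1 ≠ condBelief p z.1 z.2.2) := by
  simp [Tset]

/-- Mixing lemma: for `q, p` nonneg, there is a mixture `r` whose `Tset` contains both. -/
lemma mix_exists (q p : ((∀ j, A j) × Θ) → ℝ) (hq0 : ∀ x, 0 ≤ q x) (hp0 : ∀ x, 0 ≤ p x) :
    ∃ t : ℝ, t ∈ Set.Ioo (0:ℝ) 1 ∧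
      Tset q ∪ Tset p ⊆ Tset (fun x => t * q x + (1 - t) * p x) := by
  have key : ∀ z : (Σ i : I, A i × A i), ∃ B : Set ℝ, B.Finite ∧
      (Sum.inr z ∈ Tset q ∪ Tset p → ∀ t : ℝ, t ∈ Set.Ioo (0:ℝ) 1 → t ∉ B →
        condBelief (fun x => t * q x + (1 - t) * p x) z.1 z.2.1 ≠
        condBelief (fun x => t * q x + (1 - t) * p x) z.1 z.2.2) := by
    intro z
    by_cases hz : Sum.inr z ∈ Tset q ∪ Tset p
    · rcases Finset.mem_union.mp hz with hz | hz
      · rw [mem_Tset_inr] at hz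
        obtain ⟨B, hBf, hB⟩ := exists_finite_badset q p hp0 z.1 z.2.1 z.2.2 hz.1 hz.2.1 hz.2.2
        exact ⟨B, hBf, fun _ t ht htB => hB t ht.1 ht.2.le htB⟩
      · rw [mem_Tset_inr] at hz
        obtain ⟨B, hBf, hB⟩ := exists_finite_badset p q hq0 z.1 z.2.1 z.2.2 hz.1 hz.2.1 hz.2.2
        refine ⟨(fun t : ℝ => 1 - t) ⁻¹' B,
          hBf.preimage ((sub_right_injective).injOn), fun _ t ht htB => ?_⟩
        have hfun : (fun x => (1 - t) * p x + (1 - (1 - t)) * q x) =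
            (fun x => t * q x + (1 - t) * p x) := by
          funext x; ring
        have := hB (1 - t) (by linarith [ht.2]) (by linarith [ht.1]) htB
        rwa [hfun] at this
    · exact ⟨∅, Set.finite_empty, fun h => absurd h hz⟩
  choose Bf hBfin hBgood using key
  have hBad : (⋃ z, Bf z).Finite := Set.finite_iUnion hBfin
  obtain ⟨t, ht⟩ := ((Set.Ioo_infinite (by norm_num : (0:ℝ) < 1)).diff hBad).nonempty
  refine ⟨t, ht.1, ?_⟩
  have ht0 : (0:ℝ) < t := ht.1.1
  have ht1 : t < 1 := ht.1.2
  intro z hz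
  have hsupp : ∀ (i : I) (ai : A i), (0 < marg q i ai ∨ 0 < marg p i ai) →
      0 < marg (fun x => t * q x + (1 - t) * p x) i ai := by
    intro i ai h
    rw [marg_mix]
    have h1 := marg_nonneg q hq0 i ai
    have h2 := marg_nonneg p hp0 i ai
    rcases h with h | h <;> nlinarith
  match z with
  | Sum.inl z =>
    rw [mem_Tset_inl]
    rcases Finset.mem_union.mp hz with h | h <;> rw [mem_Tset_inl] at h
    · exact hsupp _ _ (Or.inl h)
    · exact hsupp _ _ (Or.inr h)
  | Sum.inr z =>
    rw [mem_Tset_inr]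
    have hne := hBgood z hz t ht.1 (fun hmem => ht.2 (Set.mem_iUnion.mpr ⟨z, hmem⟩))
    refine ⟨?_, ?_, hne⟩
    · rcases Finset.mem_union.mp hz with h | h <;> rw [mem_Tset_inr] at h
      · exact hsupp _ _ (Or.inl h.1)
      · exact hsupp _ _ (Or.inr h.1)
    · rcases Finset.mem_union.mp hz with h | h <;> rw [mem_Tset_inr] at h
      · exact hsupp _ _ (Or.inl h.2.1)
      · exact hsupp _ _ (Or.inr h.2.1)

end Aux

/-- every non-empty closed convex set `P` of BCEs contains a
`P`-minimally mixed BCE. -/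
theorem stmt6 {I : Type} [Fintype I] [DecidableEq I]
    {A : I → Type} [∀ i, Fintype (A i)] [∀ i, DecidableEq (A i)]
    {Θ : Type} [Fintype Θ]
    (π : Θ → ℝ) (hπpos : ∀ θ, 0 < π θ) (hπ1 : ∑ θ, π θ = 1)
    (u : ∀ i : I, ((∀ j, A j) × Θ) → ℝ)
    (P : Set (((∀ j, A j) × Θ) → ℝ))
    (hPne : P.Nonempty) (hPcl : IsClosed P) (hPcv : Convex ℝ P)
    (hPbce : ∀ p ∈ P, IsOutcome π p ∧ Obedient u p) :
    ∃ p ∈ P, MinMixed P p := by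
  set S : Set ℕ := (fun p => (Tset p).card) '' P with hS
  have hSne : S.Nonempty := hPne.image _
  have hSbdd : BddAbove S := by
    refine ⟨Fintype.card ((Σ i : I, A i) ⊕ (Σ i : I, A i × A i)), ?_⟩
    rintro n ⟨p, -, rfl⟩
    exact Finset.card_le_card (Finset.subset_univ _) |>.trans (le_of_eq (Finset.card_univ))
  obtain ⟨p, hpP, hpcard⟩ := Nat.sSup_mem hSne hSbdd
  refine ⟨p, hpP, ?_⟩
  have hmax : ∀ q ∈ P, Tset q ⊆ Tset p := by
    intro q hqP
    have hq0 := (hPbce q hqP).1.1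
    have hp0 := (hPbce p hpP).1.1
    obtain ⟨t, htIoo, hsub⟩ := mix_exists q p hq0 hp0
    set r : ((∀ j, A j) × Θ) → ℝ := fun x => t * q x + (1 - t) * p x with hr
    have hrP : r ∈ P := by
      have h1t : (0:ℝ) ≤ 1 - t := by linarith [htIoo.2]
      have := hPcv hqP hpP htIoo.1.le h1t (by ring : t + (1 - t) = 1)
      exact this
    have hpcard' : (Tset p).card = sSup S := hpcard
    have hrcard : (Tset r).card ≤ (Tset p).card := by
      rw [hpcard']
      exact le_csSup hSbdd ⟨r, hrP, rfl⟩
    have hpsub : Tset p ⊆ Tset r := fun z hz => hsub (Finset.mem_union.mpr (Or.inr hz))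
    have : Tset r = Tset p := Finset.eq_of_subset_of_card_le ?_ ?_ |>.symm
    · intro z hz
      rw [← this]
      exact hsub (Finset.mem_union.mpr (Or.inl hz))
    · exact hpsub
    · exact hrcard
  constructor
  · intro q hqP i ai hq
    have := hmax q hqP ((mem_Tset_inl q ⟨i, ai⟩).mpr hq)
    exact (mem_Tset_inl p ⟨i, ai⟩).mp this
  · intro q hqP i ai bi ha hb hne
    have := hmax q hqP ((mem_Tset_inr q ⟨i, ai, bi⟩).mpr ⟨ha, hb, hne⟩)
    exact ((mem_Tset_inr p ⟨i, ai, bi⟩).mp this).2.2
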